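/- For every a ∈ ℝ and every k ∈ ℕ, ∫_ℝ |h_k(x + ia)|² dx = ∫_ℝ e^{2ax} h_k(x)² dx, where h_k(x + ia) is the value of the entire extension of the Hermite function h_k at x + ia. -/

import Mathlib

/-!
Write `h_k(z) = c_k⁻¹ H_k(z) e^{-z²/2}`. For real `x`,
`|h_k(x + ia)|² = c_k⁻² e^{a²} |H_k(x + ia)|² e^{-x²}` and
`e^{2ax} h_k(x)² = c_k⁻² e^{a²} H_k(x)² e^{-(x-a)²}`, so after the translation `x ↦ x + a` it
suffices that `∫ H_k(x + u) H_k(x + v) e^{-x²} dx` takes the same value at `(u, v) = (ia, -ia)`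
and at `(a, a)`. Expanding both factors by Taylor's formula gives
`∑ u^m v^n ∫ H_k^{[m]} H_k^{[n]} e^{-x²}` with Hasse derivatives `H_k^{[m]}`. Since `H_k^{[m]}` is
a multiple of `H_{k-m}`, and by Rodrigues' formula and repeated integration by parts `H_j e^{-x²}`
is orthogonal to every polynomial of degree `< j`, only the diagonal terms survive: the integral
is a polynomial in `uv`, and `(ia)(-ia) = a · a`.
-/

open MeasureTheory

/-- The physicists' Hermite polynomial `H_k`, extended to an entire function on `ℂ`. -/
noncomputable def physHermiteC (k : ℕ) (z : ℂ) : ℂ :=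
  (-1) ^ k * Complex.exp (z ^ 2) * iteratedDeriv k (fun w : ℂ => Complex.exp (-w ^ 2)) z

/-- The Hermite function `h_k` as an entire function on `ℂ`. -/
noncomputable def hermiteFunC (k : ℕ) (z : ℂ) : ℂ :=
  ((Real.sqrt (2 ^ k * Nat.factorial k * Real.sqrt Real.pi) : ℝ) : ℂ)⁻¹ *
    physHermiteC k z * Complex.exp (-z ^ 2 / 2)

/-- The physicists' Hermite polynomial `H_k` on `ℝ`. -/
noncomputable def physHermiteR (k : ℕ) (x : ℝ) : ℝ :=
  (-1) ^ k * Real.exp (x ^ 2) * iteratedDeriv k (fun t : ℝ => Real.exp (-t ^ 2)) x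

/-- The Hermite function `h_k` on `ℝ`. -/
noncomputable def hermiteFunR (k : ℕ) (x : ℝ) : ℝ :=
  (Real.sqrt (2 ^ k * Nat.factorial k * Real.sqrt Real.pi))⁻¹ *
    physHermiteR k x * Real.exp (-x ^ 2 / 2)

open Polynomial

noncomputable def physHermitePoly : ℕ → ℝ[X]
  | 0 => 1
  | k + 1 => 2 * X * physHermitePoly k - derivative (physHermitePoly k)

theorem physHermitePoly_succ (k : ℕ) :
    physHermitePoly (k + 1) = 2 * X * physHermitePoly k - derivative (physHermitePoly k) :=
  rfl

theorem natDegree_physHermitePoly_le (k : ℕ) : (physHermitePoly k).natDegree ≤ k := by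
  induction k with
  | zero => simp [physHermitePoly]
  | succ k ih =>
    rw [physHermitePoly_succ]
    refine (natDegree_sub_le _ _).trans (max_le ?_ ?_)
    · refine natDegree_mul_le.trans ?_
      have : (2 * X : ℝ[X]).natDegree ≤ 1 := natDegree_mul_le.trans (by simp)
      omega
    · exact (natDegree_derivative_le _).trans (by omega)

theorem derivative_physHermitePoly_succ (k : ℕ) :
    derivative (physHermitePoly (k + 1)) = C (2 * (k + 1 : ℝ)) * physHermitePoly k := by
  induction k with
  | zero => simp [physHermitePoly, derivative_mul, C_ofNat]
  | succ k ih =>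
    rw [physHermitePoly_succ (k + 1), derivative_sub, derivative_mul, ih,
      physHermitePoly_succ k]
    simp only [derivative_mul, derivative_X, derivative_ofNat, derivative_natCast, derivative_one,
      map_mul, map_add, map_ofNat, map_natCast, map_one, Nat.cast_add, Nat.cast_one]
    ring

theorem iterate_derivative_physHermitePoly_add (m j : ℕ) :
    ∃ c : ℝ, derivative^[m] (physHermitePoly (m + j)) = C c * physHermitePoly j := by
  induction m with
  | zero => exact ⟨1, by simp⟩
  | succ m ih =>
    obtain ⟨c, hc⟩ := ih
    refine ⟨2 * ((m + j : ℕ) + 1 : ℝ) * c, ?_⟩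
    rw [Nat.add_right_comm, Function.iterate_succ_apply, derivative_physHermitePoly_succ,
      iterate_derivative_C_mul, hc, ← mul_assoc, ← C_mul]

theorem hasseDeriv_physHermitePoly {m k : ℕ} (hmk : m ≤ k) :
    ∃ c : ℝ, hasseDeriv m (physHermitePoly k) = C c * physHermitePoly (k - m) := by
  obtain ⟨c, hc⟩ := iterate_derivative_physHermitePoly_add m (k - m)
  rw [Nat.add_sub_cancel' hmk] at hc
  refine ⟨(m.factorial : ℝ)⁻¹ * c, ?_⟩
  have h := congrFun (factorial_smul_hasseDeriv (R := ℝ) m) (physHermitePoly k)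
  rw [LinearMap.smul_apply, hc, nsmul_eq_mul, ← C_eq_natCast] at h
  rw [C_mul, mul_assoc, ← h, ← mul_assoc, ← C_mul, inv_mul_cancel₀ (by positivity), C_1,
    one_mul]

section Rodrigues

variable {𝕜 : Type*} [NontriviallyNormedField 𝕜] [Algebra ℝ 𝕜] {E : 𝕜 → 𝕜}

theorem hasDerivAt_aeval_physHermitePoly_mul (hE : ∀ z, HasDerivAt E (-(2 * z) * E z) z)
    (k : ℕ) (z : 𝕜) :
    HasDerivAt (fun w => aeval w (physHermitePoly k) * E w)
      (-(aeval z (physHermitePoly (k + 1)) * E z)) z := by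
  refine ((physHermitePoly k).hasDerivAt_aeval z |>.mul (hE z)).congr_deriv ?_
  simp only [physHermitePoly_succ, map_sub, map_mul, aeval_X, map_ofNat]
  ring

theorem iteratedDeriv_eq_aeval_physHermitePoly_mul
    (hE : ∀ z, HasDerivAt E (-(2 * z) * E z) z) (k : ℕ) (z : 𝕜) :
    iteratedDeriv k E z = (-1) ^ k * aeval z (physHermitePoly k) * E z := by
  induction k generalizing z with
  | zero => simp [physHermitePoly]
  | succ k ih =>
    rw [iteratedDeriv_succ, funext ih]
    simp only [mul_assoc]
    refine ((hasDerivAt_aeval_physHermitePoly_mul hE k z).const_mul _).deriv.trans ?_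
    ring

end Rodrigues

theorem hasDerivAt_real_exp_neg_sq (t : ℝ) :
    HasDerivAt (fun t => Real.exp (-t ^ 2)) (-(2 * t) * Real.exp (-t ^ 2)) t := by
  simpa [mul_comm] using ((hasDerivAt_pow 2 t).neg).exp

theorem hasDerivAt_complex_exp_neg_sq (w : ℂ) :
    HasDerivAt (fun w => Complex.exp (-w ^ 2)) (-(2 * w) * Complex.exp (-w ^ 2)) w := by
  simpa [mul_comm] using ((hasDerivAt_pow 2 w).neg).cexp

theorem physHermiteC_eq_aeval (k : ℕ) (z : ℂ) :
    physHermiteC k z = aeval z (physHermitePoly k) := by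
  have hexp : Complex.exp (z ^ 2) * Complex.exp (-z ^ 2) = 1 := by
    rw [← Complex.exp_add, add_neg_cancel, Complex.exp_zero]
  have hsign : ((-1 : ℂ) ^ k) ^ 2 = 1 := by
    rw [pow_right_comm, neg_one_sq, one_pow]
  rw [physHermiteC, iteratedDeriv_eq_aeval_physHermitePoly_mul
    hasDerivAt_complex_exp_neg_sq]
  linear_combination aeval z (physHermitePoly k) * (((-1) ^ k) ^ 2 * hexp + hsign)

theorem physHermiteR_eq_eval (k : ℕ) (x : ℝ) :
    physHermiteR k x = (physHermitePoly k).eval x := by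
  have hexp : Real.exp (x ^ 2) * Real.exp (-x ^ 2) = 1 := by
    rw [← Real.exp_add, add_neg_cancel, Real.exp_zero]
  have hsign : ((-1 : ℝ) ^ k) ^ 2 = 1 := by
    rw [pow_right_comm, neg_one_sq, one_pow]
  rw [physHermiteR, iteratedDeriv_eq_aeval_physHermitePoly_mul
    hasDerivAt_real_exp_neg_sq, coe_aeval_eq_eval]
  linear_combination (physHermitePoly k).eval x * (((-1) ^ k) ^ 2 * hexp + hsign)

theorem integrable_eval_mul_exp_neg_sq (p : ℝ[X]) :
    Integrable fun x : ℝ => p.eval x * Real.exp (-x ^ 2) := by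
  induction p using Polynomial.induction_on' with
  | add p q hp hq => simpa only [eval_add, add_mul] using hp.fun_add hq
  | monomial n a =>
    have h := integrable_rpow_mul_exp_neg_mul_sq (b := 1) one_pos (s := n)
      (by linarith [n.cast_nonneg (α := ℝ)])
    simp only [Real.rpow_natCast, neg_one_mul] at h
    simpa only [eval_monomial, mul_assoc] using h.const_mul a

theorem integrable_eval_mul_eval_mul_exp_neg_sq (p r : ℝ[X]) :
    Integrable fun x : ℝ => p.eval x * (r.eval x * Real.exp (-x ^ 2)) := by
  simpa only [eval_mul, mul_assoc] using integrable_eval_mul_exp_neg_sq (p * r)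

theorem integral_eval_mul_physHermitePoly_succ_mul_exp_neg_sq (q : ℝ[X]) (j : ℕ) :
    ∫ x : ℝ, q.eval x * ((physHermitePoly (j + 1)).eval x * Real.exp (-x ^ 2))
      = ∫ x : ℝ, (derivative q).eval x * ((physHermitePoly j).eval x * Real.exp (-x ^ 2)) := by
  have hv (x : ℝ) : HasDerivAt (fun t => -((physHermitePoly j).eval t * Real.exp (-t ^ 2)))
      ((physHermitePoly (j + 1)).eval x * Real.exp (-x ^ 2)) x := by
    simpa only [coe_aeval_eq_eval, neg_neg] using
      (hasDerivAt_aeval_physHermitePoly_mul hasDerivAt_real_exp_neg_sq j x).fun_neg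
  have hint (p : ℝ[X]) : Integrable ((fun x => p.eval x) *
      fun t => -((physHermitePoly j).eval t * Real.exp (-t ^ 2))) := by
    simpa only [Pi.mul_def, mul_neg] using (integrable_eval_mul_eval_mul_exp_neg_sq p _).fun_neg
  have hibp := integral_mul_deriv_eq_deriv_mul_of_integrable (fun x _ => q.hasDerivAt x)
    (fun x _ => hv x) (integrable_eval_mul_eval_mul_exp_neg_sq q _) (hint _) (hint q)
  simpa only [mul_neg, integral_neg, neg_neg] using hibp

theorem integral_eval_mul_physHermitePoly_mul_exp_neg_sq (q : ℝ[X]) (j : ℕ) :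
    ∫ x : ℝ, q.eval x * ((physHermitePoly j).eval x * Real.exp (-x ^ 2))
      = ∫ x : ℝ, (derivative^[j] q).eval x * Real.exp (-x ^ 2) := by
  induction j generalizing q with
  | zero => simp [physHermitePoly]
  | succ j ih =>
    rw [integral_eval_mul_physHermitePoly_succ_mul_exp_neg_sq, ih, Function.iterate_succ_apply]

theorem integral_eval_mul_physHermitePoly_mul_exp_neg_sq_eq_zero {q : ℝ[X]} {j : ℕ}
    (hq : q.natDegree < j) :
    ∫ x : ℝ, q.eval x * ((physHermitePoly j).eval x * Real.exp (-x ^ 2)) = 0 := by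
  rw [integral_eval_mul_physHermitePoly_mul_exp_neg_sq, iterate_derivative_eq_zero hq]
  simp

theorem integral_eval_hasseDeriv_physHermitePoly_mul_eq_zero {k m n : ℕ} (hmn : m ≠ n) :
    ∫ x : ℝ, (hasseDeriv m (physHermitePoly k)).eval x
      * ((hasseDeriv n (physHermitePoly k)).eval x * Real.exp (-x ^ 2)) = 0 := by
  wlog hlt : m < n generalizing m n
  · simpa only [mul_left_comm] using this hmn.symm (lt_of_le_of_ne (not_lt.mp hlt) hmn.symm)
  rcases lt_or_ge k n with hkn | hnk
  · simp [hasseDeriv_eq_zero_of_lt_natDegree _ _ ((natDegree_physHermitePoly_le k).trans_lt hkn)]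
  obtain ⟨c, hc⟩ := hasseDeriv_physHermitePoly (hlt.le.trans hnk)
  have hdeg : (hasseDeriv n (physHermitePoly k)).natDegree < k - m :=
    (natDegree_hasseDeriv_le _ n).trans_lt (by have := natDegree_physHermitePoly_le k; omega)
  simp only [hc, eval_mul, eval_C, mul_assoc, mul_left_comm ((physHermitePoly (k - m)).eval _)]
  rw [integral_const_mul, integral_eval_mul_physHermitePoly_mul_exp_neg_sq_eq_zero hdeg, mul_zero]

theorem hasseDeriv_map {R S : Type*} [Semiring R] [Semiring S] (f : R →+* S) (p : R[X])
    (m : ℕ) :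
    hasseDeriv m (p.map f) = (hasseDeriv m p).map f := by
  ext n
  simp [hasseDeriv_coeff, coeff_map]

theorem aeval_add_eq_sum_hasseDeriv {R A : Type*} [CommRing R] [CommRing A] [Algebra R A]
    (p : R[X]) (x u : A) :
    aeval (x + u) p
      = ∑ m ∈ Finset.range (p.natDegree + 1), aeval x (hasseDeriv m p) * u ^ m := by
  have hdeg : (taylor x (p.map (algebraMap R A))).natDegree < p.natDegree + 1 := by
    rw [natDegree_taylor]
    exact Nat.lt_succ_of_le natDegree_map_le
  rw [aeval_def, eval₂_eq_eval_map, add_comm, ← taylor_eval, eval_eq_sum_range' hdeg]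
  simp only [taylor_coeff, hasseDeriv_map, eval_map, ← aeval_def]

theorem integral_aeval_add_mul_aeval_add_mul_exp_neg_sq (p : ℝ[X])
    (horth : Pairwise fun m n => ∫ x : ℝ, (hasseDeriv m p).eval x
      * ((hasseDeriv n p).eval x * Real.exp (-x ^ 2)) = 0) (u v : ℂ) :
    ∫ x : ℝ, aeval (x + u) p * aeval (x + v) p * Real.exp (-x ^ 2)
      = ∑ m ∈ Finset.range (p.natDegree + 1), (u * v) ^ m
          * ∫ x : ℝ, (hasseDeriv m p).eval x
              * ((hasseDeriv m p).eval x * Real.exp (-x ^ 2)) := by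
  have hterm (m n : ℕ) : Integrable fun x : ℝ => u ^ m * v ^ n
      * (((hasseDeriv m p).eval x * ((hasseDeriv n p).eval x * Real.exp (-x ^ 2)) : ℝ) : ℂ) :=
    (integrable_eval_mul_eval_mul_exp_neg_sq _ _).ofReal.const_mul _
  have hexpand (x : ℝ) : aeval (x + u) p * aeval (x + v) p * (Real.exp (-x ^ 2) : ℂ)
      = ∑ m ∈ Finset.range (p.natDegree + 1), ∑ n ∈ Finset.range (p.natDegree + 1),
          u ^ m * v ^ n * (((hasseDeriv m p).eval x
            * ((hasseDeriv n p).eval x * Real.exp (-x ^ 2)) : ℝ) : ℂ) := by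
    have hofReal (q : ℝ[X]) : aeval (x : ℂ) q = ((q.eval x : ℝ) : ℂ) := aeval_ofReal q x
    rw [aeval_add_eq_sum_hasseDeriv, aeval_add_eq_sum_hasseDeriv, Finset.sum_mul_sum,
      Finset.sum_mul]
    refine Finset.sum_congr rfl fun m _ => ?_
    rw [Finset.sum_mul]
    refine Finset.sum_congr rfl fun n _ => ?_
    rw [hofReal, hofReal]
    push_cast
    ring
  simp only [hexpand]
  rw [integral_finsetSum _ fun m _ => integrable_finsetSum _ fun n _ => hterm m n]
  refine Finset.sum_congr rfl fun m hm => ?_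
  rw [integral_finsetSum _ fun n _ => hterm m n, Finset.sum_eq_single_of_mem m hm]
  · rw [integral_const_mul, integral_complex_ofReal, mul_pow]
  · intro n _ hnm
    rw [integral_const_mul, integral_complex_ofReal, horth hnm.symm, Complex.ofReal_zero, mul_zero]

theorem integral_norm_sq_aeval_physHermitePoly_add_I_mul_exp_neg_sq (k : ℕ) (a : ℝ) :
    ∫ x : ℝ, ‖aeval (x + a * Complex.I) (physHermitePoly k)‖ ^ 2 * Real.exp (-x ^ 2)
      = ∫ x : ℝ, (physHermitePoly k).eval (x + a) ^ 2 * Real.exp (-x ^ 2) := by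
  have horth : Pairwise fun m n => ∫ x : ℝ, (hasseDeriv m (physHermitePoly k)).eval x
      * ((hasseDeriv n (physHermitePoly k)).eval x * Real.exp (-x ^ 2)) = 0 :=
    fun _ _ => integral_eval_hasseDeriv_physHermitePoly_mul_eq_zero
  have hL (x : ℝ) :
      ((‖aeval (x + a * Complex.I) (physHermitePoly k)‖ ^ 2 * Real.exp (-x ^ 2) : ℝ) : ℂ)
        = aeval (x + a * Complex.I) (physHermitePoly k)
          * aeval (x + -(a * Complex.I)) (physHermitePoly k) * Real.exp (-x ^ 2) := by
    have hconj : (starRingEnd ℂ) (x + a * Complex.I) = x + -(a * Complex.I) := by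
      simp [Complex.conj_ofReal]
    rw [← hconj, aeval_conj, Complex.mul_conj']
    push_cast
    ring
  have hR (x : ℝ) : (((physHermitePoly k).eval (x + a) ^ 2 * Real.exp (-x ^ 2) : ℝ) : ℂ)
      = aeval (x + (a : ℂ)) (physHermitePoly k)
        * aeval (x + (a : ℂ)) (physHermitePoly k) * Real.exp (-x ^ 2) := by
    have hofReal : aeval ((x + a : ℝ) : ℂ) (physHermitePoly k)
        = (((physHermitePoly k).eval (x + a) : ℝ) : ℂ) := aeval_ofReal _ _
    rw [← Complex.ofReal_add, hofReal]
    push_cast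
    ring
  have hprod : (a : ℂ) * Complex.I * -((a : ℂ) * Complex.I) = a * a := by
    linear_combination (-(a : ℂ) ^ 2) * Complex.I_sq
  apply Complex.ofReal_injective
  rw [← integral_complex_ofReal, ← integral_complex_ofReal]
  simp only [hL, hR]
  rw [integral_aeval_add_mul_aeval_add_mul_exp_neg_sq _ horth,
    integral_aeval_add_mul_aeval_add_mul_exp_neg_sq _ horth, hprod]

theorem norm_sq_hermiteFunC_add_I_mul (k : ℕ) (x a : ℝ) :
    ‖hermiteFunC k (x + a * Complex.I)‖ ^ 2
      = (Real.sqrt (2 ^ k * Nat.factorial k * Real.sqrt Real.pi))⁻¹ ^ 2 * Real.exp (a ^ 2)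
        * (‖aeval (x + a * Complex.I) (physHermitePoly k)‖ ^ 2 * Real.exp (-x ^ 2)) := by
  have hre : (-(x + a * Complex.I) ^ 2 / 2).re = (a ^ 2 - x ^ 2) / 2 := by
    simp [sq]
  have hexp : Real.exp ((a ^ 2 - x ^ 2) / 2) ^ 2 = Real.exp (a ^ 2) * Real.exp (-x ^ 2) := by
    rw [sq, ← Real.exp_add, ← Real.exp_add]
    ring_nf
  rw [hermiteFunC, physHermiteC_eq_aeval, norm_mul, norm_mul, norm_inv, Complex.norm_real,
    Real.norm_of_nonneg (Real.sqrt_nonneg _), Complex.norm_exp, hre, mul_pow, mul_pow, hexp]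
  ring

theorem exp_mul_hermiteFunR_sq (k : ℕ) (a x : ℝ) :
    Real.exp (2 * a * x) * hermiteFunR k x ^ 2
      = (Real.sqrt (2 ^ k * Nat.factorial k * Real.sqrt Real.pi))⁻¹ ^ 2 * Real.exp (a ^ 2)
        * ((physHermitePoly k).eval x ^ 2 * Real.exp (-(x - a) ^ 2)) := by
  have hexp : Real.exp (2 * a * x) * Real.exp (-x ^ 2 / 2) ^ 2
      = Real.exp (a ^ 2) * Real.exp (-(x - a) ^ 2) := by
    rw [sq, ← Real.exp_add, ← Real.exp_add, ← Real.exp_add]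
    ring_nf
  rw [hermiteFunR, physHermiteR_eq_eval, mul_pow, mul_pow]
  linear_combination (Real.sqrt (2 ^ k * Nat.factorial k * Real.sqrt Real.pi))⁻¹ ^ 2
    * (physHermitePoly k).eval x ^ 2 * hexp

/-- `∫ℝ |h_k(x + ia)|² dx = ∫ℝ e^{2ax} h_k(x)² dx`. -/
theorem stmt_3 (a : ℝ) (k : ℕ) :
    ∫ x : ℝ, ‖hermiteFunC k ((x : ℂ) + a * Complex.I)‖ ^ 2
      = ∫ x : ℝ, Real.exp (2 * a * x) * hermiteFunR k x ^ 2 := by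
  have hshift : ∫ x : ℝ, (physHermitePoly k).eval (x + a) ^ 2 * Real.exp (-x ^ 2)
      = ∫ x : ℝ, (physHermitePoly k).eval x ^ 2 * Real.exp (-(x - a) ^ 2) := by
    simpa only [add_sub_cancel_right] using (integral_add_right_eq_self
      (fun y => (physHermitePoly k).eval y ^ 2 * Real.exp (-(y - a) ^ 2)) a)
  simp only [norm_sq_hermiteFunC_add_I_mul, exp_mul_hermiteFunR_sq, integral_const_mul]
  rw [integral_norm_sq_aeval_physHermitePoly_add_I_mul_exp_neg_sq, hshift]
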